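/- If a sequent S contains no strong quantifiers (i.e., S is 'skolemized'), then for any substitution set σ instantiating the weak quantifiers, the expansion sequent ET(S, σ) contains no strong nodes, its dependency relation is acyclic, and hence ET(S, σ) is an expansion proof iff its deep sequent is a propositional tautology. -/
import Mathlib


/-- First-order terms: variables, constants, unary function symbols. -/
inductive Tm where
  | var : ℕ → Tm
  | cst : ℕ → Tm
  | fn  : ℕ → Tm → Tm
deriving DecidableEq

/-- First-order formulas with named bound variables. -/
inductive Fml where
  | atom : ℕ → List Tm → Fml
  | neg  : Fml → Fml
  | and  : Fml → Fml → Fml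
  | or   : Fml → Fml → Fml
  | imp  : Fml → Fml → Fml
  | all  : ℕ → Fml → Fml
  | ex   : ℕ → Fml → Fml
deriving DecidableEq

/-- Substitution of a single variable in a term. -/
def Tm.subst (x : ℕ) (t : Tm) : Tm → Tm
  | .var y => if y = x then t else .var y
  | .cst c => .cst c
  | .fn f u => .fn f (Tm.subst x t u)

/-- Simultaneous substitution in a term. -/
def Tm.substAll (σ : ℕ → Tm) : Tm → Tm
  | .var y => σ y
  | .cst c => .cst c
  | .fn f u => .fn f (u.substAll σ)

/-- Free variables of a term. -/
def Tm.fv : Tm → Set ℕ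
  | .var y => {y}
  | .cst _ => ∅
  | .fn _ u => u.fv

/-- Substitution of a single variable in a formula (naive; bound variables are
assumed pairwise distinct and distinct from substituted variables). -/
def Fml.subst (x : ℕ) (t : Tm) : Fml → Fml
  | .atom n ts => .atom n (ts.map (Tm.subst x t))
  | .neg A => .neg (A.subst x t)
  | .and A B => .and (A.subst x t) (B.subst x t)
  | .or A B => .or (A.subst x t) (B.subst x t)
  | .imp A B => .imp (A.subst x t) (B.subst x t)
  | .all y A => if y = x then .all y A else .all y (A.subst x t)
  | .ex y A => if y = x then .ex y A else .ex y (A.subst x t)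

/-- Simultaneous substitution in a formula. -/
def Fml.substAll (σ : ℕ → Tm) : Fml → Fml
  | .atom n ts => .atom n (ts.map (Tm.substAll σ))
  | .neg A => .neg (A.substAll σ)
  | .and A B => .and (A.substAll σ) (B.substAll σ)
  | .or A B => .or (A.substAll σ) (B.substAll σ)
  | .imp A B => .imp (A.substAll σ) (B.substAll σ)
  | .all y A => .all y (A.substAll (Function.update σ y (.var y)))
  | .ex y A => .ex y (A.substAll (Function.update σ y (.var y)))

/-- A formula is quantifier-free. -/
def Fml.qf : Fml → Prop
  | .atom _ _ => True
  | .neg A => A.qf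
  | .and A B => A.qf ∧ B.qf
  | .or A B => A.qf ∧ B.qf
  | .imp A B => A.qf ∧ B.qf
  | .all _ _ => False
  | .ex _ _ => False

/-- First-order structures (with at least one element; every constant symbol is
interpreted, so the language has at least one constant). -/
structure Str where
  Dom : Type
  inh : Dom
  cI : ℕ → Dom
  fI : ℕ → Dom → Dom
  pI : ℕ → List Dom → Prop

/-- Evaluation of terms. -/
def Tm.eval (S : Str) (v : ℕ → S.Dom) : Tm → S.Dom
  | .var y => v y
  | .cst c => S.cI c
  | .fn f u => S.fI f (u.eval S v)

/-- Tarskian satisfaction. -/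
def Fml.Sat (S : Str) (v : ℕ → S.Dom) : Fml → Prop
  | .atom n ts => S.pI n (ts.map (Tm.eval S v))
  | .neg A => ¬ A.Sat S v
  | .and A B => A.Sat S v ∧ B.Sat S v
  | .or A B => A.Sat S v ∨ B.Sat S v
  | .imp A B => A.Sat S v → B.Sat S v
  | .all y A => ∀ d : S.Dom, A.Sat S (Function.update v y d)
  | .ex y A => ∃ d : S.Dom, A.Sat S (Function.update v y d)

/-- Validity of a formula. -/
def Fml.Valid (F : Fml) : Prop := ∀ (S : Str) (v : ℕ → S.Dom), F.Sat S v

/-- Validity of a sequent `Γ ⊢ Δ`: in every structure, if all formulas of `Γ`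
hold then some formula of `Δ` holds.  For quantifier-free sequents this is the
notion of being a (propositional) tautology. -/
def ValidSeq (Γ Δ : List Fml) : Prop :=
  ∀ (S : Str) (v : ℕ → S.Dom), (∀ F ∈ Γ, F.Sat S v) → ∃ G ∈ Δ, G.Sat S v

/-- Polarities: `false` is negative (0), `true` is positive (1). -/
abbrev Pol := Bool

/-- The subformula occurring at a given position. -/
inductive SubAt : Fml → List ℕ → Fml → Prop where
  | here (F : Fml) : SubAt F [] F
  | neg  : SubAt A pos F' → SubAt (.neg A) (0 :: pos) F'
  | andL : SubAt A pos F' → SubAt (.and A B) (0 :: pos) F'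
  | andR : SubAt B pos F' → SubAt (.and A B) (1 :: pos) F'
  | orL  : SubAt A pos F' → SubAt (.or A B) (0 :: pos) F'
  | orR  : SubAt B pos F' → SubAt (.or A B) (1 :: pos) F'
  | impL : SubAt A pos F' → SubAt (.imp A B) (0 :: pos) F'
  | impR : SubAt B pos F' → SubAt (.imp A B) (1 :: pos) F'
  | all  : SubAt A pos F' → SubAt (.all x A) (0 :: pos) F'
  | ex   : SubAt A pos F' → SubAt (.ex x A) (0 :: pos) F'

/-- `PolRel F q pos p`: if `F` itself is assigned polarity `q`, then the
subformula occurrence at position `pos` has polarity `p`, according to the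
recursive polarity rules (∧, ∨, ∀, ∃ preserve polarity; ¬ and the antecedent
of → flip it). -/
inductive PolRel : Fml → Pol → List ℕ → Pol → Prop where
  | here (F : Fml) (q : Pol) : PolRel F q [] q
  | neg  : PolRel A (!q) pos p → PolRel (.neg A) q (0 :: pos) p
  | andL : PolRel A q pos p → PolRel (.and A B) q (0 :: pos) p
  | andR : PolRel B q pos p → PolRel (.and A B) q (1 :: pos) p
  | orL  : PolRel A q pos p → PolRel (.or A B) q (0 :: pos) p
  | orR  : PolRel B q pos p → PolRel (.or A B) q (1 :: pos) p
  | impL : PolRel A (!q) pos p → PolRel (.imp A B) q (0 :: pos) p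
  | impR : PolRel B q pos p → PolRel (.imp A B) q (1 :: pos) p
  | all  : PolRel A q pos p → PolRel (.all x A) q (0 :: pos) p
  | ex   : PolRel A q pos p → PolRel (.ex x A) q (0 :: pos) p

mutual
/-- Expansion trees.  `weak x A chs` is a weak quantifier node
`Λx.A +^{t₁} E₁ ⋯ +^{tₙ} Eₙ`; `strong x A α E` is a strong quantifier node
`Πx.A +^α E` with eigenvariable `α`. -/
inductive ET where
  | atom : ℕ → List Tm → ET
  | neg : ET → ET
  | and : ET → ET → ET
  | or : ET → ET → ET
  | imp : ET → ET → ET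
  | weak : ℕ → Fml → ETs → ET
  | strong : ℕ → Fml → ℕ → ET → ET
/-- Lists of children of a weak quantifier node, with their edge labels. -/
inductive ETs where
  | nil : ETs
  | cons : Tm → ET → ETs → ETs
end

/-- The shallow formula `Sh(E, p)` of an expansion tree. -/
def ET.sh : ET → Pol → Fml
  | .atom n ts, _ => .atom n ts
  | .neg E, p => .neg (E.sh (!p))
  | .and E1 E2, p => .and (E1.sh p) (E2.sh p)
  | .or E1 E2, p => .or (E1.sh p) (E2.sh p)
  | .imp E1 E2, p => .imp (E1.sh (!p)) (E2.sh p)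
  | .weak x A _, false => .all x A
  | .weak x A _, true => .ex x A
  | .strong x A _ _, false => .ex x A
  | .strong x A _ _, true => .all x A

/-- The empty conjunction. -/
def fTop : Fml := .imp (.atom 0 []) (.atom 0 [])
/-- The empty disjunction. -/
def fBot : Fml := .neg fTop

mutual
/-- The deep (quantifier-free) formula `Dp(E, p)` of an expansion tree. -/
def ET.dp : ET → Pol → Fml
  | .atom n ts, _ => .atom n ts
  | .neg E, p => .neg (E.dp (!p))
  | .and E1 E2, p => .and (E1.dp p) (E2.dp p)
  | .or E1 E2, p => .or (E1.dp p) (E2.dp p)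
  | .imp E1 E2, p => .imp (E1.dp (!p)) (E2.dp p)
  | .weak _ _ chs, p => ETs.dps chs p
  | .strong _ _ _ E, p => E.dp p
/-- Conjunction (polarity 0) or disjunction (polarity 1) of the deep formulas
of the children of a weak node. -/
def ETs.dps : ETs → Pol → Fml
  | .nil, false => fTop
  | .nil, true => fBot
  | .cons _ E .nil, p => E.dp p
  | .cons _ E (.cons t E' rest), false => .and (E.dp false) (ETs.dps (.cons t E' rest) false)
  | .cons _ E (.cons t E' rest), true => .or (E.dp true) (ETs.dps (.cons t E' rest) true)
end

mutual
/-- Well-formedness of an expansion tree at a given polarity: the shallow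
formula of the child under edge label `t` of a quantifier node `Q x. A` must
be `A[x/t]` (resp. `A[x/α]` for the eigenvariable `α` of a strong node). -/
def ET.WF : ET → Pol → Prop
  | .atom _ _, _ => True
  | .neg E, p => E.WF (!p)
  | .and E1 E2, p => E1.WF p ∧ E2.WF p
  | .or E1 E2, p => E1.WF p ∧ E2.WF p
  | .imp E1 E2, p => E1.WF (!p) ∧ E2.WF p
  | .weak x A chs, p => ETs.WFs x A chs p
  | .strong x A a E, p => E.sh p = A.subst x (.var a) ∧ E.WF p
def ETs.WFs : ℕ → Fml → ETs → Pol → Prop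
  | _, _, .nil, _ => True
  | x, A, .cons t E rest, p => E.sh p = A.subst x t ∧ E.WF p ∧ ETs.WFs x A rest p
end

mutual
/-- An expansion tree contains only weak quantifier nodes. -/
def ET.weakOnly : ET → Prop
  | .atom _ _ => True
  | .neg E => E.weakOnly
  | .and E1 E2 => E1.weakOnly ∧ E2.weakOnly
  | .or E1 E2 => E1.weakOnly ∧ E2.weakOnly
  | .imp E1 E2 => E1.weakOnly ∧ E2.weakOnly
  | .weak _ _ chs => ETs.weakOnlys chs
  | .strong _ _ _ _ => False
def ETs.weakOnlys : ETs → Prop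
  | .nil => True
  | .cons _ E rest => E.weakOnly ∧ ETs.weakOnlys rest
end

mutual
/-- The eigenvariables of the strong nodes occurring in an expansion tree. -/
def ET.eig : ET → Set ℕ
  | .atom _ _ => ∅
  | .neg E => E.eig
  | .and E1 E2 => E1.eig ∪ E2.eig
  | .or E1 E2 => E1.eig ∪ E2.eig
  | .imp E1 E2 => E1.eig ∪ E2.eig
  | .weak _ _ chs => ETs.eigs chs
  | .strong _ _ a E => insert a E.eig
def ETs.eigs : ETs → Set ℕ
  | .nil => ∅
  | .cons _ E rest => E.eig ∪ ETs.eigs rest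
end

mutual
/-- The terms occurring (as edge labels) in an expansion tree. -/
def ET.labels : ET → Set Tm
  | .atom _ _ => ∅
  | .neg E => E.labels
  | .and E1 E2 => E1.labels ∪ E2.labels
  | .or E1 E2 => E1.labels ∪ E2.labels
  | .imp E1 E2 => E1.labels ∪ E2.labels
  | .weak _ _ chs => ETs.labelss chs
  | .strong _ _ a E => insert (.var a) E.labels
def ETs.labelss : ETs → Set Tm
  | .nil => ∅
  | .cons t E rest => insert t (E.labels ∪ ETs.labelss rest)
end

mutual
/-- `ET.domi E t a`: inside `E`, the term `t` labels an edge below which there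
is a strong node with eigenvariable `a` (i.e. `t` dominates that node). -/
def ET.domi : ET → Tm → ℕ → Prop
  | .atom _ _, _, _ => False
  | .neg E, t, a => E.domi t a
  | .and E1 E2, t, a => E1.domi t a ∨ E2.domi t a
  | .or E1 E2, t, a => E1.domi t a ∨ E2.domi t a
  | .imp E1 E2, t, a => E1.domi t a ∨ E2.domi t a
  | .weak _ _ chs, t, a => ETs.domis chs t a
  | .strong _ _ b E, t, a => (t = .var b ∧ a ∈ E.eig) ∨ E.domi t a
def ETs.domis : ETs → Tm → ℕ → Prop
  | .nil, _, _ => False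
  | .cons s E rest, t, a => (t = s ∧ a ∈ E.eig) ∨ E.domi t a ∨ ETs.domis rest t a
end

/-- An expansion sequent: antecedent and succedent lists of expansion trees. -/
def IsLabel (ant suc : List ET) (t : Tm) : Prop := ∃ E ∈ ant ++ suc, t ∈ E.labels

/-- The one-step dependency relation `<⁰ε` on term occurrences of the
expansion sequent: `t <⁰ε s` iff some variable free in `s` is the
eigenvariable of a node dominated by `t`. -/
def Dep0 (ant suc : List ET) (t s : Tm) : Prop :=
  IsLabel ant suc t ∧ IsLabel ant suc s ∧
    ∃ a ∈ s.fv, ∃ E ∈ ant ++ suc, E.domi t a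

/-- The dependency relation `<ε`: the transitive closure of `<⁰ε`. -/
def Dep (ant suc : List ET) : Tm → Tm → Prop := Relation.TransGen (Dep0 ant suc)

/-- The deep sequent of an expansion sequent is a tautology. -/
def DeepTaut (ant suc : List ET) : Prop :=
  ValidSeq (ant.map (ET.dp · false)) (suc.map (ET.dp · true))

/-- An expansion sequent is an expansion proof iff its deep sequent is a
tautology and its dependency relation is acyclic. -/
def ExpProof (ant suc : List ET) : Prop :=
  DeepTaut ant suc ∧ ∀ t, ¬ Dep ant suc t t

/-- Translation of a formula into an expansion tree (Definition 8), with
`W x` the list of instance terms for the weak quantifier binding `x`, `Sg x`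
the eigenvariable for the strong quantifier binding `x`, and `ρ` the
substitution accumulated so far. -/
def ETof (W : ℕ → List Tm) (Sg : ℕ → ℕ) : (ℕ → Tm) → Pol → Fml → ET
  | ρ, _, .atom n ts => .atom n (ts.map (Tm.substAll ρ))
  | ρ, p, .neg A => .neg (ETof W Sg ρ (!p) A)
  | ρ, p, .and A B => .and (ETof W Sg ρ p A) (ETof W Sg ρ p B)
  | ρ, p, .or A B => .or (ETof W Sg ρ p A) (ETof W Sg ρ p B)
  | ρ, p, .imp A B => .imp (ETof W Sg ρ (!p) A) (ETof W Sg ρ p B)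
  | ρ, false, .all x A =>
      .weak x (A.substAll (Function.update ρ x (.var x)))
        ((W x).foldr (fun t acc =>
          ETs.cons t (ETof W Sg (Function.update ρ x t) false A) acc) .nil)
  | ρ, true, .all x A =>
      .strong x (A.substAll (Function.update ρ x (.var x))) (Sg x)
        (ETof W Sg (Function.update ρ x (.var (Sg x))) true A)
  | ρ, false, .ex x A =>
      .strong x (A.substAll (Function.update ρ x (.var x))) (Sg x)
        (ETof W Sg (Function.update ρ x (.var (Sg x))) false A)
  | ρ, true, .ex x A =>
      .weak x (A.substAll (Function.update ρ x (.var x)))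
        ((W x).foldr (fun t acc =>
          ETs.cons t (ETof W Sg (Function.update ρ x t) true A) acc) .nil)

/-- The expansion sequent obtained from a sequent and substitution data
(Definition 9). -/
def ETseq (W : ℕ → List Tm) (Sg : ℕ → ℕ) (Γ Δ : List Fml) : List ET × List ET :=
  (Γ.map (ETof W Sg Tm.var false), Δ.map (ETof W Sg Tm.var true))


/-- `F.noStrongQ q`: the formula `F`, assigned polarity `q`, contains no
strong quantifier occurrences (no ∀ occurring positively and no ∃ occurring
negatively), i.e. `F` is "skolemized". -/
def Fml.noStrongQ : Fml → Pol → Prop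
  | .atom _ _, _ => True
  | .neg A, q => A.noStrongQ (!q)
  | .and A B, q => A.noStrongQ q ∧ B.noStrongQ q
  | .or A B, q => A.noStrongQ q ∧ B.noStrongQ q
  | .imp A B, q => A.noStrongQ (!q) ∧ B.noStrongQ q
  | .all _ A, q => q = false ∧ A.noStrongQ q
  | .ex _ A, q => q = true ∧ A.noStrongQ q

mutual
lemma ET.weakOnly_not_domi : ∀ (E : ET), E.weakOnly → ∀ t a, ¬ E.domi t a
  | .atom _ _, _, _, _, h => h
  | .neg E, hw, t, a, h => ET.weakOnly_not_domi E hw t a h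
  | .and E1 E2, hw, t, a, h =>
      h.elim (ET.weakOnly_not_domi E1 hw.1 t a) (ET.weakOnly_not_domi E2 hw.2 t a)
  | .or E1 E2, hw, t, a, h =>
      h.elim (ET.weakOnly_not_domi E1 hw.1 t a) (ET.weakOnly_not_domi E2 hw.2 t a)
  | .imp E1 E2, hw, t, a, h =>
      h.elim (ET.weakOnly_not_domi E1 hw.1 t a) (ET.weakOnly_not_domi E2 hw.2 t a)
  | .weak _ _ chs, hw, t, a, h => ETs.weakOnlys_not_domis chs hw t a h
  | .strong _ _ _ _, hw, _, _, _ => hw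
lemma ET.weakOnly_eig_empty : ∀ (E : ET), E.weakOnly → ∀ a, a ∉ E.eig
  | .atom _ _, _, _, h => h
  | .neg E, hw, a, h => ET.weakOnly_eig_empty E hw a h
  | .and E1 E2, hw, a, h =>
      h.elim (ET.weakOnly_eig_empty E1 hw.1 a) (ET.weakOnly_eig_empty E2 hw.2 a)
  | .or E1 E2, hw, a, h =>
      h.elim (ET.weakOnly_eig_empty E1 hw.1 a) (ET.weakOnly_eig_empty E2 hw.2 a)
  | .imp E1 E2, hw, a, h =>
      h.elim (ET.weakOnly_eig_empty E1 hw.1 a) (ET.weakOnly_eig_empty E2 hw.2 a)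
  | .weak _ _ chs, hw, a, h => ETs.weakOnlys_eigs_empty chs hw a h
  | .strong _ _ _ _, hw, _, _ => hw
lemma ETs.weakOnlys_not_domis : ∀ (chs : ETs), chs.weakOnlys → ∀ t a, ¬ ETs.domis chs t a
  | .nil, _, _, _, h => h
  | .cons _ E rest, hw, t, a, h =>
      h.elim (fun ⟨_, ha⟩ => ET.weakOnly_eig_empty E hw.1 a ha)
        (fun h' => h'.elim (ET.weakOnly_not_domi E hw.1 t a)
          (ETs.weakOnlys_not_domis rest hw.2 t a))
lemma ETs.weakOnlys_eigs_empty : ∀ (chs : ETs), chs.weakOnlys → ∀ a, a ∉ ETs.eigs chs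
  | .nil, _, _, h => h
  | .cons _ E rest, hw, a, h =>
      h.elim (ET.weakOnly_eig_empty E hw.1 a) (ETs.weakOnlys_eigs_empty rest hw.2 a)
end

lemma foldr_weakOnlys (W : ℕ → List Tm) (f : Tm → ET) (hf : ∀ t, (f t).weakOnly)
    (L : List Tm) :
    ETs.weakOnlys (L.foldr (fun t acc => ETs.cons t (f t) acc) .nil) := by
  induction L with
  | nil => trivial
  | cons t L ih => exact ⟨hf t, ih⟩

lemma ETof_weakOnly (W : ℕ → List Tm) (Sg : ℕ → ℕ) :
    ∀ (F : Fml) (ρ : ℕ → Tm) (p : Pol), F.noStrongQ p → (ETof W Sg ρ p F).weakOnly := by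
  intro F
  induction F with
  | atom n ts => intro ρ p _; cases p <;> trivial
  | neg A ih => intro ρ p h; cases p <;> exact ih _ _ h
  | and A B ihA ihB => intro ρ p h; cases p <;> exact ⟨ihA _ _ h.1, ihB _ _ h.2⟩
  | or A B ihA ihB => intro ρ p h; cases p <;> exact ⟨ihA _ _ h.1, ihB _ _ h.2⟩
  | imp A B ihA ihB => intro ρ p h; cases p <;> exact ⟨ihA _ _ h.1, ihB _ _ h.2⟩
  | all x A ih =>
      intro ρ p h
      rcases h with ⟨hp, hA⟩
      subst hp
      exact foldr_weakOnlys W _ (fun t => ih _ _ hA) (W x)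
  | ex x A ih =>
      intro ρ p h
      rcases h with ⟨hp, hA⟩
      subst hp
      exact foldr_weakOnlys W _ (fun t => ih _ _ hA) (W x)

theorem skolemized_expansion' (Γ Δ : List Fml) (W : ℕ → List Tm) (Sg : ℕ → ℕ)
    (hΓ : ∀ F ∈ Γ, F.noStrongQ false) (hΔ : ∀ F ∈ Δ, F.noStrongQ true) :
    (∀ E ∈ (ETseq W Sg Γ Δ).1 ++ (ETseq W Sg Γ Δ).2, E.weakOnly) ∧
    (∀ t, ¬ Dep (ETseq W Sg Γ Δ).1 (ETseq W Sg Γ Δ).2 t t) ∧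
    (ExpProof (ETseq W Sg Γ Δ).1 (ETseq W Sg Γ Δ).2 ↔
      DeepTaut (ETseq W Sg Γ Δ).1 (ETseq W Sg Γ Δ).2) := by
  have hwo : ∀ E ∈ (ETseq W Sg Γ Δ).1 ++ (ETseq W Sg Γ Δ).2, E.weakOnly := by
    intro E hE
    rcases List.mem_append.1 hE with h | h <;>
      · rcases List.mem_map.1 h with ⟨F, hF, rfl⟩
        first
          | exact ETof_weakOnly W Sg F _ _ (hΓ F hF)
          | exact ETof_weakOnly W Sg F _ _ (hΔ F hF)
  have hnd : ∀ t s, ¬ Dep0 (ETseq W Sg Γ Δ).1 (ETseq W Sg Γ Δ).2 t s := by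
    rintro t s ⟨_, _, a, _, E, hE, hdom⟩
    exact ET.weakOnly_not_domi E (hwo E hE) t a hdom
  have hacyc : ∀ t, ¬ Dep (ETseq W Sg Γ Δ).1 (ETseq W Sg Γ Δ).2 t t := by
    intro t h
    rcases Relation.TransGen.head'_iff.1 h with ⟨s, h0, _⟩
    exact hnd t s h0
  exact ⟨hwo, hacyc, ⟨fun h => h.1, fun h => ⟨h, hacyc⟩⟩⟩

/-- if a sequent contains no strong quantifiers then, for any
substitution data, the expansion sequent `ET(S, σ)` contains no strong nodes,
its dependency relation is acyclic, and it is an expansion proof iff its deep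
sequent is a propositional tautology. -/
theorem skolemized_expansion (Γ Δ : List Fml) (W : ℕ → List Tm) (Sg : ℕ → ℕ)
    (hΓ : ∀ F ∈ Γ, F.noStrongQ false) (hΔ : ∀ F ∈ Δ, F.noStrongQ true) :
    (∀ E ∈ (ETseq W Sg Γ Δ).1 ++ (ETseq W Sg Γ Δ).2, E.weakOnly) ∧
    (∀ t, ¬ Dep (ETseq W Sg Γ Δ).1 (ETseq W Sg Γ Δ).2 t t) ∧
    (ExpProof (ETseq W Sg Γ Δ).1 (ETseq W Sg Γ Δ).2 ↔
      DeepTaut (ETseq W Sg Γ Δ).1 (ETseq W Sg Γ Δ).2) :=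
  skolemized_expansion' Γ Δ W Sg hΓ hΔ
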